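/- arXiv:1002.3474 — 8 statements merged into one kernel-verified Lean document; each statement's English description precedes it below -/
import Mathlib

section
/- If b : ℕ → ℝ is defined by b 1 = n * exp(-β) + 1 and b k = (n+1) * b(k-1) - (k-1) * a(k-1) where a 1 = n - 1 and a k = (n-k) * b(k-1), with β ≥ 0 and n ≥ 2, then for every k ≥ 2 (with k ≤ n) it holds that b k ≥ k * b(k-1). -/
theorem stmt_0 (n : ℕ) (hn : 2 ≤ n) (β : ℝ) (hβ : 0 ≤ β)
    (a b : ℕ → ℝ)
    (ha1 : a 1 = (n : ℝ) - 1)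
    (hb1 : b 1 = (n : ℝ) * Real.exp (-β) + 1)
    (ha : ∀ k, 2 ≤ k → a k = ((n : ℝ) - k) * b (k - 1))
    (hb : ∀ k, 2 ≤ k → b k = ((n : ℝ) + 1) * b (k - 1) - ((k : ℝ) - 1) * a (k - 1)) :
    ∀ k, 2 ≤ k → k ≤ n → b k ≥ (k : ℝ) * b (k - 1) := by
  intro k hk
  induction k, hk using Nat.le_induction with
  | base =>
    intro _
    rw [hb 2 le_rfl]
    norm_num
    rw [ha1, hb1]
    have h1 : (0:ℝ) < Real.exp (-β) := Real.exp_pos _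
    have h2 : (2:ℝ) ≤ (n:ℝ) := by exact_mod_cast hn
    nlinarith [mul_nonneg (mul_nonneg (by linarith : (0:ℝ) ≤ (n:ℝ)-1) (by linarith : (0:ℝ) ≤ (n:ℝ))) h1.le]
  | succ k hk2 ih =>
    intro hkn
    have hkn' : k ≤ n := by omega
    have ihk := ih hkn'
    rw [hb (k+1) (by omega)]
    simp only [Nat.add_sub_cancel]
    rw [ha k hk2]
    have hc : ((k+1:ℕ):ℝ) = (k:ℝ) + 1 := by push_cast; ring
    rw [hc]
    have hnk : (0:ℝ) ≤ (n:ℝ) - (k:ℝ) := by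
      have : (k:ℝ) ≤ (n:ℝ) := by exact_mod_cast hkn'
      linarith
    have key : (0:ℝ) ≤ ((n:ℝ) - k) * (b k - (k:ℝ) * b (k-1)) :=
      mul_nonneg hnk (by linarith [ihk])
    nlinarith [key]
end

section
/- Define δ : ℕ → ℝ by δ n = 1, δ k = ((n-k)/k) * δ (k+1) + 1 for 2 ≤ k ≤ n-1, and δ 1 = (1/2) * ((n-1) * δ 2 + 1). Then there exists a constant c > 0 such that for all n ≥ 2, max {δ k : 1 ≤ k ≤ n} ≤ c * sqrt(n) * 2^n. -/
/-!
Multiplying by a binomial coefficient linearises the recurrence: since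
`C(n-1, k-1) * (n-k)/k = C(n-1, k)`, the quantity `C(n-1, k-1) * δ k` satisfies a telescoping
recurrence and equals the binomial tail `∑_{j ≥ k-1} C(n-1, j) ≤ 2^(n-1)`. So `δ k ≤ 2^(n-1)`
for `k ≥ 2`, and the same bound for `δ 1` follows from its defining equation.
-/

open Finset

theorem Nat.cast_choose_mul_sub_div_eq_choose_succ (m k : ℕ) :
    (m.choose k : ℝ) * ((m - k) / (k + 1)) = m.choose (k + 1) := by
  rcases le_or_gt k m with hkm | hmk
  · rw [mul_div_assoc', div_eq_iff (by positivity : (k : ℝ) + 1 ≠ 0), ← Nat.cast_sub hkm]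
    exact_mod_cast (Nat.choose_succ_right_eq m k).symm
  · simp [Nat.choose_eq_zero_of_lt hmk, Nat.choose_eq_zero_of_lt (hmk.trans (Nat.lt_succ_self k))]

theorem Nat.sum_Icc_cast_choose_le_two_pow (a m : ℕ) :
    ∑ j ∈ Icc a m, (m.choose j : ℝ) ≤ 2 ^ m := by
  have hsub : Icc a m ⊆ range (m + 1) := fun j hj ↦ by
    simp only [mem_Icc, mem_range] at hj ⊢; omega
  exact_mod_cast (sum_le_sum_of_subset hsub).trans_eq (Nat.sum_range_choose m)

namespace DeltaRecurrence

variable {n : ℕ} {δ : ℕ → ℝ} (hδn : δ n = 1)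
  (hrec : ∀ k, 2 ≤ k → k ≤ n - 1 → δ k = (((n : ℝ) - k) / k) * δ (k + 1) + 1)
include hδn hrec

theorem choose_mul_succ_eq_sum_Icc_choose {k : ℕ} (hk : 1 ≤ k) (hkn : k ≤ n - 1) :
    ((n - 1).choose k : ℝ) * δ (k + 1) = ∑ j ∈ Icc k (n - 1), ((n - 1).choose j : ℝ) := by
  induction hkn using Nat.decreasingInduction with
  | self => simp [Nat.sub_add_cancel (by omega : 1 ≤ n), hδn]
  | of_succ k hkn ih =>
    have hcoef : (n : ℝ) - (k + 1 : ℕ) = ((n - 1 : ℕ) : ℝ) - k := by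
      push_cast [Nat.cast_sub (by omega : 1 ≤ n)]; ring
    rw [hrec (k + 1) (by omega) hkn, hcoef, mul_add, ← mul_assoc, Nat.cast_add_one,
      Nat.cast_choose_mul_sub_div_eq_choose_succ, ih (by omega), mul_one,
      Icc_add_one_left_eq_Ioc, add_comm]
    exact add_sum_Ioc_eq_sum_Icc (f := fun j ↦ ((n - 1).choose j : ℝ)) hkn.le

theorem le_two_pow_of_two_le {k : ℕ} (hk : 2 ≤ k) (hkn : k ≤ n) : δ k ≤ 2 ^ (n - 1) := by
  obtain ⟨i, rfl⟩ : ∃ i, k = i + 1 := ⟨k - 1, by omega⟩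
  have hC : (1 : ℝ) ≤ (n - 1).choose i := by exact_mod_cast Nat.choose_pos (by omega)
  calc δ (i + 1) = (∑ j ∈ Icc i (n - 1), ((n - 1).choose j : ℝ)) / (n - 1).choose i := by
        rw [← choose_mul_succ_eq_sum_Icc_choose hδn hrec (by omega) (by omega),
          mul_div_cancel_left₀ _ (by positivity)]
    _ ≤ ∑ j ∈ Icc i (n - 1), ((n - 1).choose j : ℝ) :=
        div_le_self (sum_nonneg fun _ _ ↦ Nat.cast_nonneg _) hC
    _ ≤ 2 ^ (n - 1) := Nat.sum_Icc_cast_choose_le_two_pow _ _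

theorem le_two_pow (hn : 2 ≤ n) (hδ1 : δ 1 = (((n : ℝ) - 1) * δ 2 + 1) / 2) {k : ℕ}
    (hk : 1 ≤ k) (hkn : k ≤ n) : δ k ≤ 2 ^ (n - 1) := by
  rcases hk.eq_or_lt with rfl | hk
  · have hδ2 : ((n : ℝ) - 1) * δ 2 ≤ 2 ^ (n - 1) := by
      have h := choose_mul_succ_eq_sum_Icc_choose hδn hrec le_rfl (by omega)
      rw [Nat.choose_one_right, Nat.cast_sub (by omega), Nat.cast_one] at h
      exact h.trans_le (Nat.sum_Icc_cast_choose_le_two_pow _ _)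
    have h1 : (1 : ℝ) ≤ 2 ^ (n - 1) := one_le_pow₀ one_le_two
    rw [hδ1]
    linarith
  · exact le_two_pow_of_two_le hδn hrec hk hkn

end DeltaRecurrence

theorem stmt_3 :
    ∃ c : ℝ, 0 < c ∧ ∀ n : ℕ, 2 ≤ n → ∀ δ : ℕ → ℝ,
      δ n = 1 →
      (∀ k, 2 ≤ k → k ≤ n - 1 → δ k = (((n : ℝ) - k) / k) * δ (k + 1) + 1) →
      δ 1 = (((n : ℝ) - 1) * δ 2 + 1) / 2 →
      ∀ k, 1 ≤ k → k ≤ n → δ k ≤ c * Real.sqrt n * 2 ^ n := by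
  refine ⟨1, one_pos, fun n hn δ hδn hrec hδ1 k hk hkn ↦ ?_⟩
  have hsqrt : 1 ≤ Real.sqrt n := Real.one_le_sqrt.mpr (by exact_mod_cast hn.trans' one_le_two)
  calc δ k ≤ 2 ^ (n - 1) := DeltaRecurrence.le_two_pow hδn hrec hn hδ1 hk hkn
    _ ≤ 2 ^ n := pow_le_pow_right₀ one_le_two (Nat.sub_le n 1)
    _ ≤ 1 * Real.sqrt n * 2 ^ n := by rw [one_mul]; exact le_mul_of_one_le_left (by positivity) hsqrt
end

section
/- With δ defined by δ n = 1, δ k = ((n-k)/k) * δ(k+1) + 1 for 2 ≤ k ≤ n-1, and δ 1 = ((n-1)δ 2 + 1)/2, for every k with 3 ≤ k ≤ n-1 it holds that (1/(2n)) * ((n-1) δ k + (k-1) δ (k-1) + (n-k) δ (k+1)) = δ k - 1/(2n). -/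
theorem stmt_4 (n : ℕ) (hn : 5 ≤ n) (δ : ℕ → ℝ)
    (hδn : δ n = 1)
    (hδ : ∀ k, 2 ≤ k → k ≤ n - 1 → δ k = (((n : ℝ) - k) / k) * δ (k + 1) + 1)
    (hδ1 : δ 1 = (((n : ℝ) - 1) * δ 2 + 1) / 2) :
    ∀ k, 3 ≤ k → k ≤ n - 1 →
      (1 / (2 * (n : ℝ))) * (((n : ℝ) - 1) * δ k + ((k : ℝ) - 1) * δ (k - 1)
        + ((n : ℝ) - k) * δ (k + 1)) = δ k - 1 / (2 * (n : ℝ)) := by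
  intro k hk3 hkn
  have h1 : 1 ≤ k := by omega
  have e1 := hδ (k - 1) (by omega) (by omega)
  have hks : k - 1 + 1 = k := by omega
  rw [hks] at e1
  have hcast : ((k - 1 : ℕ) : ℝ) = (k : ℝ) - 1 := by
    push_cast [Nat.cast_sub h1]; ring
  rw [hcast] at e1
  have e2 := hδ k (by omega) hkn
  have hk0 : (k : ℝ) ≠ 0 := by positivity
  have hk1 : (k : ℝ) - 1 ≠ 0 := by
    have : (3 : ℝ) ≤ k := by exact_mod_cast hk3
    linarith
  have hn0 : (n : ℝ) ≠ 0 := by positivity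
  rw [e1, e2]
  field_simp
  ring
end

section
/- With δ defined by δ n = 1, δ k = ((n-k)/k) δ(k+1) + 1 for 2 ≤ k ≤ n-1, and δ 1 = ((n-1)δ 2 + 1)/2, for every β ≥ 0: ((n-1)/n) * (δ 1 / (1 + exp(-β)) + δ 2 / 2) ≤ δ 1 - 1/(2n). -/
theorem stmt_5 (n : ℕ) (hn : 3 ≤ n) (β : ℝ) (hβ : 0 ≤ β) (δ : ℕ → ℝ)
    (hδn : δ n = 1)
    (hδ : ∀ k, 2 ≤ k → k ≤ n - 1 → δ k = (((n : ℝ) - k) / k) * δ (k + 1) + 1)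
    (hδ1 : δ 1 = (((n : ℝ) - 1) * δ 2 + 1) / 2) :
    (((n : ℝ) - 1) / n) * (δ 1 / (1 + Real.exp (-β)) + δ 2 / 2)
      ≤ δ 1 - 1 / (2 * (n : ℝ)) := by
  have key : ∀ m k, 2 ≤ k → k ≤ n → n - k ≤ m → 1 ≤ δ k := by
    intro m
    induction m with
    | zero =>
      intro k h2 hk hm
      have : k = n := by omega
      rw [this, hδn]
    | succ m ih =>
      intro k h2 hk hm
      rcases eq_or_lt_of_le hk with h | h
      · rw [h, hδn]
      · have hk' : k ≤ n - 1 := by omega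
        rw [hδ k h2 hk']
        have h1 := ih (k + 1) (by omega) (by omega) (by omega)
        have hkr : (0:ℝ) < (k:ℝ) := by exact_mod_cast (by omega : 0 < k)
        have hnk : (0:ℝ) ≤ (n:ℝ) - (k:ℝ) := by
          have : (k:ℝ) ≤ (n:ℝ) := by exact_mod_cast hk
          linarith
        have hq : 0 ≤ ((n:ℝ) - k) / k := div_nonneg hnk hkr.le
        nlinarith
  have hδ2 : 1 ≤ δ 2 := key n 2 le_rfl (by omega) (by omega)
  have hδ1pos : 0 ≤ δ 1 := by
    rw [hδ1]
    have hn1 : (2:ℝ) ≤ (n:ℝ) - 1 := by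
      have : (3:ℝ) ≤ (n:ℝ) := by exact_mod_cast hn
      linarith
    nlinarith
  have hd : 1 ≤ 1 + Real.exp (-β) := by
    have := Real.exp_pos (-β); linarith
  have hdiv : δ 1 / (1 + Real.exp (-β)) ≤ δ 1 := by
    apply div_le_self hδ1pos hd
  have hnpos : (0:ℝ) < (n:ℝ) := by exact_mod_cast (by omega : 0 < n)
  have heq : (((n : ℝ) - 1) / n) * (δ 1 + δ 2 / 2) = δ 1 - 1 / (2 * (n : ℝ)) := by
    field_simp
    nlinarith [hδ1]
  have hfrac : 0 ≤ ((n : ℝ) - 1) / n := by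
    apply div_nonneg _ hnpos.le
    have : (3:ℝ) ≤ (n:ℝ) := by exact_mod_cast hn
    linarith
  calc (((n : ℝ) - 1) / n) * (δ 1 / (1 + Real.exp (-β)) + δ 2 / 2)
      ≤ (((n : ℝ) - 1) / n) * (δ 1 + δ 2 / 2) := by
        apply mul_le_mul_of_nonneg_left _ hfrac
        linarith
    _ = δ 1 - 1 / (2 * (n : ℝ)) := heq
end

section
/- With δ defined by δ n = 1, δ k = ((n-k)/k) δ(k+1) + 1 for 2 ≤ k ≤ n-1, and δ 1 = ((n-1)δ 2 + 1)/2, for every β ≥ 0: (1/(2n)) * ((2/(1+exp(-β))) * δ 1 + (n-1) * δ 2 + (n-2) * δ 3) ≤ δ 2 - 1/(2n). -/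
theorem stmt_6 (n : ℕ) (hn : 4 ≤ n) (β : ℝ) (hβ : 0 ≤ β) (δ : ℕ → ℝ)
    (hδn : δ n = 1)
    (hδ : ∀ k, 2 ≤ k → k ≤ n - 1 → δ k = (((n : ℝ) - k) / k) * δ (k + 1) + 1)
    (hδ1 : δ 1 = (((n : ℝ) - 1) * δ 2 + 1) / 2) :
    (1 / (2 * (n : ℝ))) * ((2 / (1 + Real.exp (-β))) * δ 1
      + ((n : ℝ) - 1) * δ 2 + ((n : ℝ) - 2) * δ 3)
      ≤ δ 2 - 1 / (2 * (n : ℝ)) := by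
  have hn4 : (4 : ℝ) ≤ (n : ℝ) := by exact_mod_cast hn
  -- nonnegativity of δ k for 2 ≤ k ≤ n
  have key : ∀ m k, k + m = n → 2 ≤ k → 0 ≤ δ k := by
    intro m
    induction m with
    | zero =>
      intro k hk _
      have : k = n := by omega
      rw [this, hδn]; norm_num
    | succ m ih =>
      intro k hk h2
      have hk1 : k ≤ n - 1 := by omega
      rw [hδ k h2 hk1]
      have h1 := ih (k + 1) (by omega) (by omega)
      have hkn : (k : ℝ) ≤ (n : ℝ) := by exact_mod_cast (by omega : k ≤ n)
      have hkpos : (0 : ℝ) < (k : ℝ) := by exact_mod_cast (by omega : 0 < k)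
      have := mul_nonneg (div_nonneg (by linarith : (0:ℝ) ≤ (n:ℝ) - (k:ℝ)) hkpos.le) h1
      linarith
  have hδ2 : 0 ≤ δ 2 := key (n - 2) 2 (by omega) le_rfl
  have hδ1pos : 0 ≤ δ 1 := by rw [hδ1]; nlinarith
  have h3 := hδ 2 le_rfl (by omega)
  have hc : 2 / (1 + Real.exp (-β)) ≤ 2 := by
    have he : 0 < Real.exp (-β) := Real.exp_pos _
    have : (1 : ℝ) ≤ 1 + Real.exp (-β) := by linarith
    exact div_le_self (by norm_num) this
  have hcpos : 0 ≤ 2 / (1 + Real.exp (-β)) := by positivity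
  have hmul : (2 / (1 + Real.exp (-β))) * δ 1 ≤ 2 * δ 1 :=
    mul_le_mul_of_nonneg_right hc hδ1pos
  have hnpos : (0 : ℝ) < 2 * (n : ℝ) := by linarith
  have hstep : (1 / (2 * (n : ℝ))) * ((2 / (1 + Real.exp (-β))) * δ 1
      + ((n : ℝ) - 1) * δ 2 + ((n : ℝ) - 2) * δ 3)
      ≤ (1 / (2 * (n : ℝ))) * (2 * δ 1 + ((n : ℝ) - 1) * δ 2 + ((n : ℝ) - 2) * δ 3) := by
    apply mul_le_mul_of_nonneg_left _ (by positivity)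
    linarith
  have heq : (1 / (2 * (n : ℝ))) * (2 * δ 1 + ((n : ℝ) - 1) * δ 2 + ((n : ℝ) - 2) * δ 3)
      = δ 2 - 1 / (2 * (n : ℝ)) := by
    push_cast at h3 hδ1 ⊢
    field_simp
    field_simp at h3 hδ1
    nlinarith [h3, hδ1]
  linarith
end

section
/- Let γ k = (p k * exp(-β) + l k)/(q k * exp(-β) + r k) with p, q, l, r as defined (p 1 = 0, q 1 = n, l 1 = n-1, r 1 = 1, and the common recursions p k = (n-k) q(k-1), q k = (n+1) q(k-1) - (k-1) p(k-1), l k = (n-k) r(k-1), r k = (n+1) r(k-1) - (k-1) l(k-1)). Then for every k with 1 ≤ k ≤ n and every β ≥ 0, γ k < n. -/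
theorem stmt_14 (n : ℕ) (hn : 2 ≤ n) (β : ℝ) (hβ : 0 ≤ β)
    (p q l r : ℕ → ℝ)
    (hp1 : p 1 = 0) (hq1 : q 1 = (n : ℝ))
    (hl1 : l 1 = (n : ℝ) - 1) (hr1 : r 1 = 1)
    (hp : ∀ k, 2 ≤ k → p k = ((n : ℝ) - k) * q (k - 1))
    (hq : ∀ k, 2 ≤ k → q k = ((n : ℝ) + 1) * q (k - 1) - ((k : ℝ) - 1) * p (k - 1))
    (hl : ∀ k, 2 ≤ k → l k = ((n : ℝ) - k) * r (k - 1))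
    (hr : ∀ k, 2 ≤ k → r k = ((n : ℝ) + 1) * r (k - 1) - ((k : ℝ) - 1) * l (k - 1)) :
    ∀ k, 1 ≤ k → k ≤ n →
      (p k * Real.exp (-β) + l k) / (q k * Real.exp (-β) + r k) < (n : ℝ) := by
  have hepos : 0 < Real.exp (-β) := Real.exp_pos _
  have hn1 : (1 : ℝ) ≤ (n : ℝ) := by exact_mod_cast Nat.one_le_of_lt hn
  have key : ∀ k, 1 ≤ k → k ≤ n →
      0 ≤ p k ∧ p k ≤ q k ∧ 0 < q k ∧
      l k = ((n : ℝ) - k) * (Nat.factorial (k - 1) : ℝ) ∧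
      r k = (Nat.factorial k : ℝ) := by
    intro k hk
    induction k, hk using Nat.le_induction with
    | base =>
      intro _
      refine ⟨by rw [hp1], by rw [hp1, hq1]; positivity, by rw [hq1]; positivity, ?_, ?_⟩
      · simp [hl1]
      · simp [hr1]
    | succ k hk ih =>
      intro hkn
      obtain ⟨hp0, hpq, hq0, hlf, hrf⟩ := ih (by omega)
      have h2 : 2 ≤ k + 1 := by omega
      have hs : k + 1 - 1 = k := rfl
      have hpe : p (k + 1) = ((n : ℝ) - (k + 1)) * q k := by
        rw [hp (k + 1) h2, hs]; push_cast; ring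
      have hqe : q (k + 1) = ((n : ℝ) + 1) * q k - (k : ℝ) * p k := by
        rw [hq (k + 1) h2, hs]; push_cast; ring
      have hnk : (k : ℝ) + 1 ≤ (n : ℝ) := by exact_mod_cast hkn
      have hk1 : (1 : ℝ) ≤ (k : ℝ) := by exact_mod_cast hk
      refine ⟨?_, ?_, ?_, ?_, ?_⟩
      · rw [hpe]; nlinarith
      · rw [hpe, hqe]; nlinarith
      · rw [hqe]; nlinarith
      · rw [hl (k + 1) h2, hs, hrf]
      · rw [hr (k + 1) h2, hs, hrf, hlf]
        have hfk : (Nat.factorial k : ℝ) = (k : ℝ) * (Nat.factorial (k - 1) : ℝ) := by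
          obtain ⟨m, rfl⟩ : ∃ m, k = m + 1 := ⟨k - 1, by omega⟩
          simp [Nat.factorial_succ]
        rw [Nat.factorial_succ]
        push_cast
        rw [hfk]
        ring
  intro k hk hkn
  obtain ⟨hp0, hpq, hq0, hlf, hrf⟩ := key k hk hkn
  have hf0 : (0 : ℝ) < (Nat.factorial k : ℝ) := by positivity
  have hden : 0 < q k * Real.exp (-β) + r k := by rw [hrf]; positivity
  rw [div_lt_iff₀ hden]
  have hk1 : (1 : ℝ) ≤ (k : ℝ) := by exact_mod_cast hk
  have hnk : (k : ℝ) ≤ (n : ℝ) := by exact_mod_cast hkn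
  have hfk : (Nat.factorial k : ℝ) = (k : ℝ) * (Nat.factorial (k - 1) : ℝ) := by
    obtain ⟨m, rfl⟩ : ∃ m, k = m + 1 := ⟨k - 1, by omega⟩
    simp [Nat.factorial_succ]
  have hf0' : (0 : ℝ) < (Nat.factorial (k - 1) : ℝ) := by positivity
  -- l k < n * r k
  have h1 : l k < (n : ℝ) * r k := by
    rw [hlf, hrf, hfk]
    nlinarith [mul_lt_mul_of_pos_right (show (n:ℝ) - k < (n:ℝ) * k by nlinarith) hf0']
  -- p k ≤ n * q k
  have hpnq : p k ≤ (n : ℝ) * q k := by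
    nlinarith [mul_nonneg (show (0:ℝ) ≤ (n:ℝ) - 1 by linarith) hq0.le]
  have h2 : p k * Real.exp (-β) ≤ (n : ℝ) * q k * Real.exp (-β) :=
    mul_le_mul_of_nonneg_right hpnq hepos.le
  have expand : (n : ℝ) * (q k * Real.exp (-β) + r k)
      = (n : ℝ) * q k * Real.exp (-β) + (n : ℝ) * r k := by ring
  rw [expand]
  linarith
end

section
/- Define δ : ℕ → ℝ via δ n = 1, δ k = (a k / b k) δ(k+1) + 1 for 2 ≤ k ≤ n-1, δ 1 = ((1+exp(-β))/2) * ((a 1 / b 1) δ 2 + 1), where a 1 = n-1, b 1 = n exp(-β)+1, a k = (n-k) b(k-1), b k = (n+1) b(k-1) - (k-1) a(k-1). Then the last coupling inequality holds: ((n-1)/(2n)) * (δ n + δ (n-1)) ≤ 1 - 1/(2n). -/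
theorem stmt_18 (n : ℕ) (hn : 2 ≤ n) (β : ℝ) (hβ : 0 ≤ β)
    (a b δ : ℕ → ℝ)
    (ha1 : a 1 = (n : ℝ) - 1)
    (hb1 : b 1 = (n : ℝ) * Real.exp (-β) + 1)
    (ha : ∀ k, 2 ≤ k → a k = ((n : ℝ) - k) * b (k - 1))
    (hb : ∀ k, 2 ≤ k → b k = ((n : ℝ) + 1) * b (k - 1) - ((k : ℝ) - 1) * a (k - 1))
    (hδn : δ n = 1)
    (hδ : ∀ k, 2 ≤ k → k ≤ n - 1 → δ k = (a k / b k) * δ (k + 1) + 1)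
    (hδ1 : δ 1 = ((1 + Real.exp (-β)) / 2) * ((a 1 / b 1) * δ 2 + 1)) :
    (((n : ℝ) - 1) / (2 * (n : ℝ))) * (δ n + δ (n - 1)) ≤ 1 - 1 / (2 * (n : ℝ)) := by
  have he : (0:ℝ) < Real.exp (-β) := Real.exp_pos _
  have he1 : Real.exp (-β) ≤ 1 := Real.exp_le_one_iff.mpr (by linarith)
  have hn1 : (1:ℝ) ≤ (n:ℝ) - 1 := by
    have : (2:ℝ) ≤ (n:ℝ) := by exact_mod_cast hn
    linarith
  have hnpos : (0:ℝ) < (n:ℝ) := by linarith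
  have hb1pos : 0 < b 1 := by rw [hb1]; nlinarith
  have hb1ge : 1 ≤ b 1 := by rw [hb1]; nlinarith
  have claim : ∀ k, 2 ≤ k → k ≤ n → 0 < b (k-1) ∧ (k:ℝ) * b (k-1) ≤ b k := by
    intro k hk
    induction k, hk using Nat.le_induction with
    | base =>
      intro _
      refine ⟨hb1pos, ?_⟩
      have h2 := hb 2 le_rfl
      have h1 : a (2-1) = (n:ℝ) - 1 := by simpa using ha1
      rw [h2, h1]
      norm_num
      nlinarith
    | succ k hk ih =>
      intro hkn
      obtain ⟨hbkm, hbk⟩ := ih (by omega)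
      have hbkpos : 0 < b k := by
        have : (0:ℝ) < (k:ℝ) * b (k-1) := by positivity
        linarith
      constructor
      · simpa using hbkpos
      · have hbeq := hb (k+1) (by omega)
        have haeq := ha k (by omega)
        have hcast : ((k+1 : ℕ) : ℝ) = (k:ℝ) + 1 := by push_cast; ring
        have hsimp : (k+1) - 1 = k := by omega
        rw [hsimp] at hbeq
        simp only [hsimp]
        rw [hbeq, haeq, hcast]
        have hnk : (1:ℝ) ≤ (n:ℝ) - k := by
          have : (k:ℝ) + 1 ≤ (n:ℝ) := by exact_mod_cast hkn
          linarith
        nlinarith [mul_le_mul_of_nonneg_left hbk (by linarith : (0:ℝ) ≤ (n:ℝ) - k)]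
  rcases eq_or_lt_of_le hn with h2 | h3
  · -- n = 2
    subst h2
    have hδ2 : δ 2 = 1 := hδn
    rw [hδ1, hδ2, ha1, hb1] at *
    norm_num at *
    have hbpos : (0:ℝ) < 2 * Real.exp (-β) + 1 := by linarith
    have hkey : (1 + Real.exp (-β)) / 2 * ((2 * Real.exp (-β) + 1)⁻¹ + 1) ≤ 2 := by
      rw [inv_eq_one_div, div_add' _ _ _ (ne_of_gt hbpos), div_mul_div_comm,
        div_le_iff₀ (by positivity)]
      have he2 : Real.exp (-β) ≤ 1 := Real.exp_le_one_iff.mpr (by linarith)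
      nlinarith [mul_le_of_le_one_left he.le he2]
    linarith
  · -- n ≥ 3
    have hn3 : 3 ≤ n := h3
    obtain ⟨hbn2, hbn1⟩ := claim (n-1) (by omega) (by omega)
    have hbn1pos : 0 < b (n-1) := by
      have hc : (0:ℝ) < ((n-1 : ℕ):ℝ) * b (n-1-1) := by
        have : (0:ℝ) < ((n-1:ℕ):ℝ) := by exact_mod_cast Nat.pos_of_ne_zero (by omega)
        positivity
      linarith
    have hδn1 : δ (n-1) = b (n-1-1) / b (n-1) + 1 := by
      have h := hδ (n-1) (by omega) le_rfl
      have hs : n - 1 + 1 = n := by omega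
      rw [hs, hδn] at h
      have haeq := ha (n-1) (by omega)
      have hc : ((n:ℝ) - ((n-1:ℕ):ℝ)) = 1 := by
        have : ((n-1:ℕ):ℝ) = (n:ℝ) - 1 := by
          push_cast [Nat.cast_sub (by omega : 1 ≤ n)]; ring
        rw [this]; ring
      rw [haeq, hc, one_mul] at h
      linarith [h]
    have hcn1 : ((n-1:ℕ):ℝ) = (n:ℝ) - 1 := by
      push_cast [Nat.cast_sub (by omega : 1 ≤ n)]; ring
    rw [hcn1] at hbn1
    have hfrac : b (n-1-1) / b (n-1) ≤ 1 / ((n:ℝ) - 1) := by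
      rw [div_le_div_iff₀ hbn1pos (by linarith)]
      nlinarith
    have key : δ (n-1) ≤ 1 / ((n:ℝ) - 1) + 1 := by rw [hδn1]; linarith
    rw [hδn]
    have hcoef : (0:ℝ) ≤ ((n:ℝ) - 1) / (2 * (n:ℝ)) := by positivity
    have hstep : (((n : ℝ) - 1) / (2 * (n : ℝ))) * (1 + δ (n - 1))
        ≤ (((n : ℝ) - 1) / (2 * (n : ℝ))) * (1 + (1 / ((n:ℝ) - 1) + 1)) := by
      apply mul_le_mul_of_nonneg_left _ hcoef
      linarith
    have heq : (((n : ℝ) - 1) / (2 * (n : ℝ))) * (1 + (1 / ((n:ℝ) - 1) + 1))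
        = 1 - 1 / (2 * (n:ℝ)) := by
      field_simp
      ring
    linarith
end

section
/- Define δ as in Lemma ubbetalog: δ n = 1, δ k = (a k / b k) δ(k+1) + 1 for 2 ≤ k ≤ n-1, δ 1 = ((1+exp(-β))/2)((a 1/b 1) δ 2 + 1). Then for every k with 3 ≤ k ≤ n-1 and β ≥ 0: (1/(2n)) * ((n-1) δ k + (k-1) δ(k-1) + (n-k) δ(k+1)) ≤ δ k - 1/(2n). -/
theorem stmt_19 (n : ℕ) (hn : 4 ≤ n) (β : ℝ) (hβ : 0 ≤ β)
    (a b δ : ℕ → ℝ)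
    (ha1 : a 1 = (n : ℝ) - 1)
    (hb1 : b 1 = (n : ℝ) * Real.exp (-β) + 1)
    (ha : ∀ k, 2 ≤ k → a k = ((n : ℝ) - k) * b (k - 1))
    (hb : ∀ k, 2 ≤ k → b k = ((n : ℝ) + 1) * b (k - 1) - ((k : ℝ) - 1) * a (k - 1))
    (hδn : δ n = 1)
    (hδ : ∀ k, 2 ≤ k → k ≤ n - 1 → δ k = (a k / b k) * δ (k + 1) + 1)
    (hδ1 : δ 1 = ((1 + Real.exp (-β)) / 2) * ((a 1 / b 1) * δ 2 + 1)) :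
    ∀ k, 3 ≤ k → k ≤ n - 1 →
      (1 / (2 * (n : ℝ))) * (((n : ℝ) - 1) * δ k + ((k : ℝ) - 1) * δ (k - 1)
        + ((n : ℝ) - k) * δ (k + 1)) ≤ δ k - 1 / (2 * (n : ℝ)) := by
  have hexp : 0 < Real.exp (-β) := Real.exp_pos _
  have hn4 : (4:ℝ) ≤ (n:ℝ) := by exact_mod_cast hn
  have key : ∀ k, 1 ≤ k → k ≤ n → 0 < b k ∧ (2 ≤ k → (k:ℝ) * b (k-1) ≤ b k) := by
    intro k hk
    induction k, hk using Nat.le_induction with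
    | base =>
      intro _
      refine ⟨?_, fun h => absurd h (by omega)⟩
      rw [hb1]; positivity
    | succ k hk1 ih =>
      intro hkn
      obtain ⟨hpos, hmono⟩ := ih (by omega)
      have hbsucc := hb (k+1) (by omega)
      simp only [Nat.add_sub_cancel] at hbsucc
      push_cast at hbsucc
      have hstep : ((k:ℝ)+1) * b k ≤ b (k+1) := by
        rcases eq_or_lt_of_le hk1 with h1 | h2
        · -- k = 1
          have hk1' : k = 1 := h1.symm
          subst hk1'
          have hb1ge : (1:ℝ) ≤ b 1 := by rw [hb1]; nlinarith
          rw [ha1] at hbsucc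
          push_cast at hbsucc ⊢
          nlinarith
        · have h2' : 2 ≤ k := h2
          have hak := ha k h2'
          have hm := hmono h2'
          have hnk : (k:ℝ) + 1 ≤ (n:ℝ) := by exact_mod_cast hkn
          nlinarith [mul_le_mul_of_nonneg_left hm (by linarith : (0:ℝ) ≤ (n:ℝ) - k)]
      have hpos' : 0 < b (k+1) := by
        have : (0:ℝ) < ((k:ℝ)+1) * b k := by positivity
        linarith
      refine ⟨hpos', fun _ => ?_⟩
      push_cast
      simpa using hstep
  intro k hk3 hkn
  obtain ⟨m, rfl⟩ : ∃ m, k = m + 2 := ⟨k - 2, by omega⟩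
  have hm1 : 1 ≤ m := by omega
  have hm2n : m + 3 ≤ n := by omega
  obtain ⟨hY, hYm⟩ := key (m+1) (by omega) (by omega)
  have hYmono : ((m:ℝ)+1) * b m ≤ b (m+1) := by
    have := hYm (by omega)
    push_cast at this
    simpa using this
  obtain ⟨hZ, -⟩ := key (m+2) (by omega) (by omega)
  have hX : 0 < b m := (key m (by omega) (by omega)).1
  have hNK : (0:ℝ) < (n:ℝ) - ((m:ℝ)+2) := by
    have : ((m:ℝ)+3) ≤ (n:ℝ) := by exact_mod_cast hm2n
    linarith
  have ha2 : a (m+2) = ((n:ℝ) - ((m:ℝ)+2)) * b (m+1) := by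
    have := ha (m+2) (by omega)
    push_cast at this
    linear_combination this
  have ha1' : a (m+1) = ((n:ℝ) - ((m:ℝ)+1)) * b m := by
    have := ha (m+1) (by omega)
    push_cast at this
    linear_combination this
  have hb2 : b (m+2) = ((n:ℝ)+1) * b (m+1) - ((m:ℝ)+1) * a (m+1) := by
    have := hb (m+2) (by omega)
    push_cast at this
    linear_combination this
  have hA2 : 0 < a (m+2) := by rw [ha2]; positivity
  have hδm1 : δ (m+1) = (a (m+1) / b (m+1)) * δ (m+2) + 1 :=
    hδ (m+1) (by omega) (by omega)
  have hδm2 : δ (m+2) = (a (m+2) / b (m+2)) * δ (m+3) + 1 :=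
    hδ (m+2) (by omega) (by omega)
  have hδm3 : δ (m+3) = (b (m+2) / a (m+2)) * (δ (m+2) - 1) := by
    rw [hδm2]
    field_simp
    ring
  have hterm : ((n:ℝ) - ((m:ℝ)+2)) * δ (m+3)
      = (b (m+2) / b (m+1)) * (δ (m+2) - 1) := by
    rw [hδm3, ha2]
    field_simp
  have hid : ((n:ℝ) - 1) * δ (m+2) + ((m:ℝ)+1) * δ (m+1)
      + ((n:ℝ) - ((m:ℝ)+2)) * δ (m+3)
      = 2 * (n:ℝ) * δ (m+2) - 1
        - ((n:ℝ) - ((m:ℝ)+1)) * (b (m+1) - ((m:ℝ)+1) * b m) / b (m+1) := by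
    rw [hδm1, hterm, hb2, ha1']
    field_simp
    ring
  have hmain : ((n:ℝ) - 1) * δ (m+2) + ((m:ℝ)+1) * δ (m+1)
      + ((n:ℝ) - ((m:ℝ)+2)) * δ (m+3) ≤ 2 * (n:ℝ) * δ (m+2) - 1 := by
    rw [hid]
    have h0 : 0 ≤ ((n:ℝ) - ((m:ℝ)+1)) * (b (m+1) - ((m:ℝ)+1) * b m) / b (m+1) :=
      div_nonneg (mul_nonneg (by linarith) (by linarith)) hY.le
    linarith
  have hfinal := mul_le_mul_of_nonneg_left hmain (by positivity : (0:ℝ) ≤ 1 / (2*(n:ℝ)))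
  have hrhs : 1 / (2*(n:ℝ)) * (2 * (n:ℝ) * δ (m+2) - 1) = δ (m+2) - 1 / (2*(n:ℝ)) := by
    field_simp
  push_cast
  calc (1 / (2 * (n:ℝ))) * (((n:ℝ) - 1) * δ (m+2) + ((m:ℝ)+2-1) * δ (m+2-1)
        + ((n:ℝ) - ((m:ℝ)+2)) * δ (m+2+1))
      = (1 / (2 * (n:ℝ))) * (((n:ℝ) - 1) * δ (m+2) + ((m:ℝ)+1) * δ (m+1)
        + ((n:ℝ) - ((m:ℝ)+2)) * δ (m+3)) := by
        rw [show m+2-1 = m+1 from rfl, show m+2+1 = m+3 from rfl]; ring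
    _ ≤ 1 / (2*(n:ℝ)) * (2 * (n:ℝ) * δ (m+2) - 1) := hfinal
    _ = _ := hrhs
end
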